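/- Suppose (d−1)·δ < 1. Then for every J ⊆ {1,…,m} with |J| ≤ d and every choice of vectors a_j in the column space of K̂_j for j ∈ J, one has Σ_{j∈J} ‖a_j‖₂ ≤ (√d / (σ·√(1 − (d−1)δ)))·‖Σ_{j∈J} K̂_j a_j‖₂; in other words, the kernel-dependence constant satisfies γ(d,𝒦) ≤ √d / (√(1 − (d−1)δ(𝒦))·σ). (Proposition 1.) -/
import Mathlib


open Matrix Finset

lemma dot_self_nonneg' {N : ℕ} (x : Fin N → ℝ) : 0 ≤ x ⬝ᵥ x := by
  simpa [dotProduct] using Finset.sum_nonneg fun i _ => mul_self_nonneg (x i)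

lemma unitary_dot {N : ℕ} (U : Matrix.unitaryGroup (Fin N) ℝ) (v w : Fin N → ℝ) :
    ((U : Matrix (Fin N) (Fin N) ℝ) *ᵥ v) ⬝ᵥ ((U : Matrix (Fin N) (Fin N) ℝ) *ᵥ w) = v ⬝ᵥ w := by
  rw [Matrix.dotProduct_mulVec, ← Matrix.mulVec_transpose, Matrix.mulVec_mulVec]
  have h1 : ((U : Matrix (Fin N) (Fin N) ℝ))ᵀ * (U : Matrix (Fin N) (Fin N) ℝ) = 1 := by
    have := U.2.1
    rwa [Matrix.star_eq_conjTranspose, Matrix.conjTranspose_eq_transpose_of_trivial] at this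
  rw [h1, Matrix.one_mulVec]

lemma eigenA {N : ℕ} {K : Matrix (Fin N) (Fin N) ℝ} (hh : K.IsHermitian)
    (hP : K.PosSemidef) {σ : ℝ} (hσ : 0 < σ)
    (heig : ∀ i, hh.eigenvalues i ≠ 0 → σ ≤ hh.eigenvalues i)
    (b : Fin N → ℝ) :
    σ^2 * ((K *ᵥ b) ⬝ᵥ (K *ᵥ b)) ≤ (K *ᵥ (K *ᵥ b)) ⬝ᵥ (K *ᵥ (K *ᵥ b)) := by
  classical
  set U := hh.eigenvectorUnitary with hU
  set lam := hh.eigenvalues with hlam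
  set D : Matrix (Fin N) (Fin N) ℝ := Matrix.diagonal lam with hD
  have hspec : K = (U : Matrix (Fin N) (Fin N) ℝ) * D * star (U : Matrix (Fin N) (Fin N) ℝ) := by
    have := hh.spectral_theorem
    simpa using this
  set c : Fin N → ℝ := star (U : Matrix (Fin N) (Fin N) ℝ) *ᵥ b with hc
  have hUU : star (U : Matrix (Fin N) (Fin N) ℝ) * (U : Matrix (Fin N) (Fin N) ℝ) = 1 := U.2.1
  have h1 : K *ᵥ b = (U : Matrix (Fin N) (Fin N) ℝ) *ᵥ (D *ᵥ c) := by
    rw [hspec, hc, Matrix.mulVec_mulVec, Matrix.mulVec_mulVec, Matrix.mul_assoc]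
  have hKK : K * K = (U : Matrix (Fin N) (Fin N) ℝ) * (D * D) * star (U : Matrix (Fin N) (Fin N) ℝ) := by
    conv_lhs => rw [hspec]
    rw [show ((U : Matrix (Fin N) (Fin N) ℝ) * D * star (U : Matrix (Fin N) (Fin N) ℝ)) *
        ((U : Matrix (Fin N) (Fin N) ℝ) * D * star (U : Matrix (Fin N) (Fin N) ℝ)) =
        (U : Matrix (Fin N) (Fin N) ℝ) * D * (star (U : Matrix (Fin N) (Fin N) ℝ) * (U : Matrix (Fin N) (Fin N) ℝ)) *
        (D * star (U : Matrix (Fin N) (Fin N) ℝ)) from by noncomm_ring, hUU]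
    noncomm_ring
  have h2 : K *ᵥ (K *ᵥ b) = (U : Matrix (Fin N) (Fin N) ℝ) *ᵥ (D *ᵥ (D *ᵥ c)) := by
    simp only [Matrix.mulVec_mulVec, hc]
    rw [hKK]
    simp [Matrix.mul_assoc]
  rw [h2, h1, unitary_dot, unitary_dot]
  have hdv : ∀ w : Fin N → ℝ, D *ᵥ w = fun i => lam i * w i := by
    intro w; funext i; simp [hD, Matrix.mulVec_diagonal]
  simp only [hdv]
  simp only [dotProduct]
  rw [Finset.mul_sum]
  apply Finset.sum_le_sum
  intro i _
  by_cases h0 : lam i = 0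
  · simp [h0]
  · have h1 := heig i h0
    have h2 : 0 ≤ lam i := hP.eigenvalues_nonneg i
    nlinarith [mul_nonneg (mul_nonneg (sub_nonneg.2 h1) (by linarith : (0:ℝ) ≤ lam i + σ)) (sq_nonneg (lam i * c i))]

lemma expand_lb {N m : ℕ}
    (Khat : Fin m → Matrix (Fin N) (Fin N) ℝ)
    (δ : ℝ) (J : Finset (Fin m))
    (a : Fin m → Fin N → ℝ) (t : Fin m → ℝ)
    (ht : ∀ j, t j = Real.sqrt ((Khat j *ᵥ a j) ⬝ᵥ (Khat j *ᵥ a j)))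
    (hcorr2 : ∀ i ∈ J, ∀ j ∈ J, i ≠ j →
      -(δ * t i * t j) ≤ (Khat i *ᵥ a i) ⬝ᵥ (Khat j *ᵥ a j)) :
    (1 + δ) * (∑ j ∈ J, t j ^ 2) - δ * (∑ j ∈ J, t j) ^ 2 ≤
      (∑ j ∈ J, Khat j *ᵥ a j) ⬝ᵥ (∑ j ∈ J, Khat j *ᵥ a j) := by
  have hexp : (∑ j ∈ J, Khat j *ᵥ a j) ⬝ᵥ (∑ j ∈ J, Khat j *ᵥ a j)
      = ∑ i ∈ J, ∑ j ∈ J, (Khat i *ᵥ a i) ⬝ᵥ (Khat j *ᵥ a j) := by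
    simp only [dotProduct, Finset.sum_apply, Finset.sum_mul_sum]
    rw [Finset.sum_comm]
    exact Finset.sum_congr rfl fun i _ => Finset.sum_comm
  rw [hexp]
  have step : ∑ i ∈ J, ∑ j ∈ J, (if i = j then t i ^ 2 else -(δ * t i * t j)) ≤
      ∑ i ∈ J, ∑ j ∈ J, (Khat i *ᵥ a i) ⬝ᵥ (Khat j *ᵥ a j) := by
    apply Finset.sum_le_sum; intro i hi
    apply Finset.sum_le_sum; intro j hj
    by_cases h : i = j
    · subst h
      rw [if_pos rfl, ht i, Real.sq_sqrt (dot_self_nonneg' _)]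
    · rw [if_neg h]; exact hcorr2 i hi j hj h
  refine le_trans (le_of_eq ?_) step
  have inner : ∀ i ∈ J, ∑ j ∈ J, (if i = j then t i ^ 2 else -(δ * t i * t j))
      = (1 + δ) * t i ^ 2 - δ * t i * ∑ j ∈ J, t j := by
    intro i hi
    have hfun : ∀ j, (if i = j then t i ^ 2 else -(δ * t i * t j))
        = (if j = i then (1 + δ) * t i ^ 2 else 0) - δ * t i * t j := by
      intro j
      by_cases h : i = j
      · subst h; simp; ring
      · rw [if_neg h, if_neg (Ne.symm h)]; ring
    simp only [hfun]
    rw [Finset.sum_sub_distrib, Finset.sum_ite_eq' J i, if_pos hi, ← Finset.mul_sum]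
  rw [Finset.sum_congr rfl inner, Finset.sum_sub_distrib, ← Finset.mul_sum]
  have : ∑ i ∈ J, δ * t i * ∑ j ∈ J, t j = δ * (∑ j ∈ J, t j) ^ 2 := by
    rw [← Finset.sum_mul, ← Finset.mul_sum]; ring
  rw [this]

/-- Proposition 1: if the pairwise correlation between the column spaces of the
kernel matrices is at most `δ` with `(d−1)δ < 1`, and every nonzero eigenvalue
of every `K̂_j` is at least `σ`, then
`γ(d, 𝒦) ≤ √d / (σ √(1 − (d−1)δ))`. -/
theorem stmt_8 (N m d : ℕ)
    (Khat : Fin m → Matrix (Fin N) (Fin N) ℝ)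
    (hherm : ∀ j, (Khat j).IsHermitian)
    (hPSD : ∀ j, (Khat j).PosSemidef)
    (σ δ : ℝ) (hσ : 0 < σ) (hδ : 0 ≤ δ)
    (heig : ∀ j i, (hherm j).eigenvalues i ≠ 0 → σ ≤ (hherm j).eigenvalues i)
    (hcorr : ∀ i j, i ≠ j → ∀ a b : Fin N → ℝ,
      |(Khat i *ᵥ a) ⬝ᵥ (Khat j *ᵥ b)| ≤
        δ * Real.sqrt ((Khat i *ᵥ a) ⬝ᵥ (Khat i *ᵥ a)) *
          Real.sqrt ((Khat j *ᵥ b) ⬝ᵥ (Khat j *ᵥ b)))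
    (hdδ : ((d : ℝ) - 1) * δ < 1) :
    ∀ J : Finset (Fin m), J.card ≤ d →
      ∀ a : Fin m → Fin N → ℝ, (∀ j ∈ J, ∃ b : Fin N → ℝ, a j = Khat j *ᵥ b) →
        ∑ j ∈ J, Real.sqrt (a j ⬝ᵥ a j) ≤
          (Real.sqrt d / (σ * Real.sqrt (1 - ((d : ℝ) - 1) * δ))) *
            Real.sqrt ((∑ j ∈ J, Khat j *ᵥ a j) ⬝ᵥ (∑ j ∈ J, Khat j *ᵥ a j)) := by
  intro J hJ a ha
  have hεpos : (0:ℝ) < 1 - ((d : ℝ) - 1) * δ := by linarith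
  set t : Fin m → ℝ := fun j => Real.sqrt ((Khat j *ᵥ a j) ⬝ᵥ (Khat j *ᵥ a j)) with htdef
  have ht0 : ∀ j, 0 ≤ t j := fun j => Real.sqrt_nonneg _
  have hcorr2 : ∀ i ∈ J, ∀ j ∈ J, i ≠ j →
      -(δ * t i * t j) ≤ (Khat i *ᵥ a i) ⬝ᵥ (Khat j *ᵥ a j) := by
    intro i _ j _ hij
    have h := hcorr i j hij (a i) (a j)
    have := (abs_le.mp h).1
    simpa [htdef, mul_assoc] using this
  have hYY := expand_lb Khat δ J a t (fun j => rfl) hcorr2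
  set Y := ∑ j ∈ J, Khat j *ᵥ a j with hYdef
  set T2 := ∑ j ∈ J, t j ^ 2 with hT2def
  have hT2nonneg : 0 ≤ T2 := Finset.sum_nonneg fun j _ => sq_nonneg _
  have hT1sq : (∑ j ∈ J, t j) ^ 2 ≤ (J.card : ℝ) * T2 := by
    rw [hT2def]
    exact_mod_cast sq_sum_le_card_mul_sum_sq (s := J) (f := t)
  have hcard : (J.card : ℝ) ≤ (d : ℝ) := by exact_mod_cast hJ
  -- ε T2 ≤ Y ⬝ᵥ Y
  have hkey : (1 - ((d : ℝ) - 1) * δ) * T2 ≤ Y ⬝ᵥ Y := by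
    have h1 : δ * (∑ j ∈ J, t j) ^ 2 ≤ δ * ((J.card : ℝ) * T2) :=
      mul_le_mul_of_nonneg_left hT1sq hδ
    have h2 : δ * ((J.card : ℝ) * T2) ≤ δ * ((d : ℝ) * T2) :=
      mul_le_mul_of_nonneg_left (mul_le_mul_of_nonneg_right hcard hT2nonneg) hδ
    nlinarith [hYY]
  -- σ² ‖a j‖² ≤ t j ²
  have hs2 : ∀ j ∈ J, σ ^ 2 * (a j ⬝ᵥ a j) ≤ t j ^ 2 := by
    intro j hj
    obtain ⟨b, hb⟩ := ha j hj
    have := eigenA (hherm j) (hPSD j) hσ (heig j) b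
    rw [htdef]
    simp only
    rw [Real.sq_sqrt (dot_self_nonneg' _), hb]
    exact this
  set A := ∑ j ∈ J, (a j ⬝ᵥ a j) with hAdef
  have hAnonneg : 0 ≤ A := Finset.sum_nonneg fun j _ => dot_self_nonneg' _
  have hσA : σ ^ 2 * A ≤ T2 := by
    rw [hAdef, Finset.mul_sum]
    exact Finset.sum_le_sum hs2
  set S := ∑ j ∈ J, Real.sqrt (a j ⬝ᵥ a j) with hSdef
  have hSnonneg : 0 ≤ S := Finset.sum_nonneg fun j _ => Real.sqrt_nonneg _
  have hSsq : S ^ 2 ≤ (d : ℝ) * A := by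
    have h1 : S ^ 2 ≤ (J.card : ℝ) * ∑ j ∈ J, Real.sqrt (a j ⬝ᵥ a j) ^ 2 := by
      rw [hSdef]
      exact_mod_cast sq_sum_le_card_mul_sum_sq (s := J) (f := fun j => Real.sqrt (a j ⬝ᵥ a j))
    have h2 : ∑ j ∈ J, Real.sqrt (a j ⬝ᵥ a j) ^ 2 = A := by
      rw [hAdef]
      exact Finset.sum_congr rfl fun j _ => Real.sq_sqrt (dot_self_nonneg' _)
    rw [h2] at h1
    exact h1.trans (mul_le_mul_of_nonneg_right hcard hAnonneg)
  -- final squared inequality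
  have hden : (0:ℝ) < σ ^ 2 * (1 - ((d : ℝ) - 1) * δ) := by positivity
  have hfinal : S ^ 2 * (σ ^ 2 * (1 - ((d : ℝ) - 1) * δ)) ≤ (d : ℝ) * (Y ⬝ᵥ Y) := by
    have s1 : S ^ 2 * (σ ^ 2 * (1 - ((d : ℝ) - 1) * δ)) ≤
        ((d : ℝ) * A) * (σ ^ 2 * (1 - ((d : ℝ) - 1) * δ)) :=
      mul_le_mul_of_nonneg_right hSsq hden.le
    have s2 : ((d : ℝ) * A) * (σ ^ 2 * (1 - ((d : ℝ) - 1) * δ)) =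
        ((d : ℝ) * (1 - ((d : ℝ) - 1) * δ)) * (σ ^ 2 * A) := by ring
    have s3 : ((d : ℝ) * (1 - ((d : ℝ) - 1) * δ)) * (σ ^ 2 * A) ≤
        ((d : ℝ) * (1 - ((d : ℝ) - 1) * δ)) * T2 := by
      apply mul_le_mul_of_nonneg_left hσA
      positivity
    have s4 : ((d : ℝ) * (1 - ((d : ℝ) - 1) * δ)) * T2 =
        (d : ℝ) * ((1 - ((d : ℝ) - 1) * δ) * T2) := by ring
    have s5 : (d : ℝ) * ((1 - ((d : ℝ) - 1) * δ) * T2) ≤ (d : ℝ) * (Y ⬝ᵥ Y) :=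
      mul_le_mul_of_nonneg_left hkey (Nat.cast_nonneg d)
    linarith [s1, s3, s5, s2.le, s2.ge, s4.le, s4.ge]
  -- conclude via square roots
  set R := (Real.sqrt d / (σ * Real.sqrt (1 - ((d : ℝ) - 1) * δ))) * Real.sqrt (Y ⬝ᵥ Y) with hRdef
  have hRnonneg : 0 ≤ R := by
    rw [hRdef]; positivity
  have hRsq : R ^ 2 = (d : ℝ) * (Y ⬝ᵥ Y) / (σ ^ 2 * (1 - ((d : ℝ) - 1) * δ)) := by
    rw [hRdef, mul_pow, div_pow, mul_pow, Real.sq_sqrt (Nat.cast_nonneg d),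
      Real.sq_sqrt hεpos.le, Real.sq_sqrt (dot_self_nonneg' _)]
    ring
  have hS2R2 : S ^ 2 ≤ R ^ 2 := by
    rw [hRsq, le_div_iff₀ hden]
    exact hfinal
  calc S = Real.sqrt (S ^ 2) := (Real.sqrt_sq hSnonneg).symm
    _ ≤ Real.sqrt (R ^ 2) := Real.sqrt_le_sqrt hS2R2
    _ = R := Real.sqrt_sq hRnonneg
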